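/- arXiv:2511.20861 — 2 statements merged into one kernel-verified Lean document; each statement's English description precedes it below -/
import Mathlib

section
/- If P is a nonabelian finite p-group of order p^n, then the derived length of P is at most 1 + log₂(n). -/
/-!
Iterating `⁅γᵢ, γⱼ⁆ ≤ γᵢ₊ⱼ₊₁` (a consequence of the three subgroups lemma) gives
`G⁽ᵏ⁾ ≤ γ_{2ᵏ-1}` for the derived and lower central series, indexed from `0`. A group of order
`pⁿ` has nilpotency class at most `n`, since its centre is nontrivial; so `G⁽ᵏ⁾ ≠ 1` forces
`2ᵏ ≤ n`. Applied with `k` one less than the derived length, this gives the bound.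
-/

/-- The derived length of a group: the least `n` with `derivedSeries G n = ⊥`. -/
noncomputable def derivedLength (G : Type*) [Group G] : ℕ :=
  sInf {n | derivedSeries G n = ⊥}

namespace Subgroup

variable {G : Type*} [Group G]

theorem commutator_commutator_le_of_rotate {H₁ H₂ H₃ N : Subgroup G} [N.Normal]
    (h1 : ⁅⁅H₂, H₃⁆, H₁⁆ ≤ N) (h2 : ⁅⁅H₃, H₁⁆, H₂⁆ ≤ N) :
    ⁅⁅H₁, H₂⁆, H₃⁆ ≤ N := by
  have le_iff_map_eq_bot : ∀ {X Y Z : Subgroup G}, ⁅⁅X, Y⁆, Z⁆ ≤ N ↔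
      ⁅⁅X.map (QuotientGroup.mk' N), Y.map (QuotientGroup.mk' N)⁆,
        Z.map (QuotientGroup.mk' N)⁆ = ⊥ := by
    intro X Y Z
    rw [← map_commutator, ← map_commutator, map_eq_bot_iff, QuotientGroup.ker_mk']
  rw [le_iff_map_eq_bot]
  exact commutator_commutator_eq_bot_of_rotate (le_iff_map_eq_bot.mp h1)
    (le_iff_map_eq_bot.mp h2)

theorem commutator_lowerCentralSeries_le (i j : ℕ) :
    ⁅lowerCentralSeries (⊤ : Subgroup G) i, lowerCentralSeries (⊤ : Subgroup G) j⁆ ≤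
      lowerCentralSeries ⊤ (i + j + 1) := by
  induction j generalizing i with
  | zero => rfl
  | succ j ih =>
    rw [lowerCentralSeries_succ, commutator_comm]
    apply commutator_commutator_le_of_rotate
    · rw [commutator_comm ⊤, ← lowerCentralSeries_succ]
      simpa [add_right_comm, add_assoc] using ih (i + 1)
    · exact commutator_mono (ih i) le_top

theorem derivedSeries_le_lowerCentralSeries (k : ℕ) :
    derivedSeries G k ≤ lowerCentralSeries (⊤ : Subgroup G) (2 ^ k - 1) := by
  induction k with
  | zero => rfl
  | succ k ih =>
    have hindex : 2 ^ (k + 1) - 1 = (2 ^ k - 1) + (2 ^ k - 1) + 1 := by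
      have := Nat.one_le_two_pow (n := k)
      omega
    rw [derivedSeries_succ, hindex]
    exact (commutator_mono ih ih).trans (commutator_lowerCentralSeries_le _ _)

end Subgroup

theorem IsPGroup.nilpotencyClass_le {G : Type*} [Group G] [Finite G] {p n : ℕ}
    [Fact p.Prime] (hcard : Nat.card G = p ^ n) : Group.nilpotencyClass G ≤ n := by
  induction n using Nat.strong_induction_on generalizing G with
  | _ n ih =>
  have hG : IsPGroup p G := IsPGroup.of_card hcard
  have := hG.isNilpotent
  rcases subsingleton_or_nontrivial G with hG1 | _
  · rw [Group.nilpotencyClass_zero_iff_subsingleton.mpr hG1]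
    exact n.zero_le
  obtain ⟨k, hk⟩ := (hG.to_quotient (Subgroup.center G)).exists_card_eq
  have hkn : k < n := by
    have := hG.center_nontrivial
    have hcenter : 1 < Nat.card (Subgroup.center G) := Finite.one_lt_card
    have hlt : p ^ k < p ^ n := by
      rw [← hk, ← hcard, Subgroup.card_eq_card_quotient_mul_card_subgroup (Subgroup.center G)]
      exact lt_mul_of_one_lt_right Nat.card_pos hcenter
    exact (Nat.pow_lt_pow_iff_right (Fact.out : p.Prime).one_lt).mp hlt
  rw [Group.nilpotencyClass_eq_quotient_center_plus_one]
  exact Nat.succ_le_of_lt ((ih k hkn hk).trans_lt hkn)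

theorem IsPGroup.two_pow_le_of_derivedSeries_ne_bot {G : Type*} [Group G] [Finite G]
    {p n k : ℕ} [Fact p.Prime] (hcard : Nat.card G = p ^ n) (hk : derivedSeries G k ≠ ⊥) :
    2 ^ k ≤ n := by
  have := (IsPGroup.of_card hcard).isNilpotent
  by_contra! hn
  refine hk (eq_bot_iff.mpr ((Subgroup.derivedSeries_le_lowerCentralSeries k).trans ?_))
  rw [le_bot_iff, Subgroup.lowerCentralSeries_eq_bot_iff_nilpotencyClass_le]
  exact (IsPGroup.nilpotencyClass_le hcard).trans (by omega)

theorem stmt1_general {P : Type*} [Group P] [Fintype P] {p n : ℕ} (hp : p.Prime)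
    (hcard : Fintype.card P = p ^ n) :
    (derivedLength P : ℝ) ≤ 1 + Real.logb 2 n := by
  have : Fact p.Prime := ⟨hp⟩
  have hlog : 0 ≤ Real.logb 2 n :=
    div_nonneg (Real.log_natCast_nonneg n) (Real.log_nonneg one_le_two)
  rcases hd : derivedLength P with _ | k
  · push_cast
    linarith
  have hk : derivedSeries P k ≠ ⊥ := Nat.notMem_of_lt_sInf (show k < derivedLength P by omega)
  have h2k : 2 ^ k ≤ n :=
    IsPGroup.two_pow_le_of_derivedSeries_ne_bot (Nat.card_eq_fintype_card.trans hcard) hk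
  have hkn : (k : ℝ) ≤ Real.logb 2 n := by
    rw [Real.le_logb_iff_rpow_le one_lt_two (by exact_mod_cast (Nat.one_le_two_pow.trans h2k))]
    exact_mod_cast h2k
  push_cast
  linarith

/-- If `P` is a nonabelian finite `p`-group of order `p ^ n`, then the derived length
of `P` is at most `1 + log₂ n`. -/
theorem stmt1 {P : Type*} [Group P] [Fintype P] {p n : ℕ} (hp : p.Prime)
    (hcard : Fintype.card P = p ^ n)
    (hna : ¬ ∀ a b : P, a * b = b * a) :
    (derivedLength P : ℝ) ≤ 1 + Real.logb 2 n :=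
  stmt1_general hp hcard
end

section
/- Let P_{p^m} denote a Sylow p-subgroup of the symmetric group on p^m letters, and let n have p-adic expansion n = a_0 + a_1 p + ⋯ + a_k p^k with 0 ≤ a_i < p and a_k > 0. Then a Sylow p-subgroup P of Sym_n, which is isomorphic to the direct product of a_i copies of P_{p^i} for i = 0, …, k, has derived length exactly k. -/
/-!
Write `n = ∑ aᵢ pⁱ` in base `p`. The product of `aᵢ` copies of the iterated wreath product
`P_{pⁱ} = C_p ≀ ⋯ ≀ C_p` acts faithfully on `n` points, one block of `pⁱ` points per copy, and
by Legendre's formula its order `p ^ ∑ aᵢ (1 + p + ⋯ + pⁱ⁻¹)` is the `p`-part of `n!`; so it is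
isomorphic to every Sylow `p`-subgroup of `Sym_n`.

A wreath product `D ≀ Q` with `Q` abelian and nontrivial has derived length one more than `D`:
its derived subgroup lies in the base `Q → D`, and evaluation at `1` maps it onto `D`, because
the commutator of `Pi.mulSingle 1 d` with a top element `q ≠ 1` has `d` as its value at `1`.
Hence `P_{pⁱ}` has derived length `i`, and the product has derived length
`max {i | aᵢ ≠ 0} = log_p n`.
-/

open Function Subgroup

section DerivedSeries

variable {G H : Type*} [Group G] [Group H]

lemma derivedLength_eq_of_derivedSeries_eq_bot_iff {k : ℕ}
    (h : ∀ j, derivedSeries G j = ⊥ ↔ k ≤ j) : derivedLength G = k := by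
  rw [derivedLength, show {j | derivedSeries G j = ⊥} = Set.Ici k from Set.ext h, csInf_Ici]

lemma derivedSeries_eq_bot_of_injective {f : G →* H} (hf : Injective f) {j : ℕ}
    (h : derivedSeries H j = ⊥) : derivedSeries G j = ⊥ := by
  have := map_derivedSeries_le_derivedSeries f j
  rwa [h, le_bot_iff, map_eq_bot_iff_of_injective _ hf] at this

lemma derivedSeries_eq_bot_of_surjective {f : G →* H} (hf : Surjective f) {j : ℕ}
    (h : derivedSeries G j = ⊥) : derivedSeries H j = ⊥ := by
  rw [← map_derivedSeries_eq hf, h, Subgroup.map_bot]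

lemma MulEquiv.derivedSeries_eq_bot_iff (e : G ≃* H) (j : ℕ) :
    derivedSeries G j = ⊥ ↔ derivedSeries H j = ⊥ :=
  ⟨derivedSeries_eq_bot_of_surjective (f := e.toMonoidHom) e.surjective,
    derivedSeries_eq_bot_of_injective (f := e.toMonoidHom) e.injective⟩

lemma derivedSeries_pi_eq_bot_iff {ι : Type*} {G : ι → Type*} [∀ i, Group (G i)] (j : ℕ) :
    derivedSeries (∀ i, G i) j = ⊥ ↔ ∀ i, derivedSeries (G i) j = ⊥ := by
  classical
  refine ⟨fun h i => derivedSeries_eq_bot_of_surjective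
    (f := Pi.evalMonoidHom G i) (fun g => ⟨Pi.mulSingle i g, by simp⟩) h, fun h => ?_⟩
  refine eq_bot_iff.mpr fun x hx => Subgroup.mem_bot.mpr (funext fun i => ?_)
  have := map_derivedSeries_le_derivedSeries (Pi.evalMonoidHom G i) j (mem_map_of_mem _ hx)
  rwa [h i, mem_bot] at this

lemma map_derivedSeries_le_derivedSeries_add (f : H →* G) {k : ℕ}
    (hf : f.range ≤ derivedSeries G k) (j : ℕ) :
    (derivedSeries H j).map f ≤ derivedSeries G (k + j) := by
  induction j with
  | zero => rwa [derivedSeries_zero, ← MonoidHom.range_eq_map]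
  | succ j ih =>
    rw [derivedSeries_succ, map_commutator, ← add_assoc, derivedSeries_succ]
    exact commutator_mono ih ih

lemma derivedSeries_add_le_map_subtype (K : Subgroup G) {k : ℕ}
    (hK : derivedSeries G k ≤ K) (j : ℕ) :
    derivedSeries G (k + j) ≤ (derivedSeries K j).map K.subtype := by
  induction j with
  | zero => rwa [derivedSeries_zero, ← MonoidHom.range_eq_map, range_subtype]
  | succ j ih =>
    rw [← add_assoc, derivedSeries_succ, derivedSeries_succ, map_commutator]
    exact commutator_mono ih ih

end DerivedSeries

open scoped commutatorElement

namespace RegularWreathProduct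

variable {D Q : Type*} [Group D] [Group Q]

instance [Nontrivial Q] : Nontrivial (D ≀ᵣ Q) :=
  Injective.nontrivial (f := inl) fun _ _ h => congrArg right h

def leftOfKerRightHom : (rightHom : D ≀ᵣ Q →* Q).ker →* (Q → D) where
  toFun w := w.1.left
  map_one' := rfl
  map_mul' v w := by
    have hv : v.1.right = 1 := v.2
    ext x
    simp [mul_def, hv]

lemma leftOfKerRightHom_injective : Injective (leftOfKerRightHom (D := D) (Q := Q)) := by
  intro v w h
  have hv : v.1.right = 1 := v.2
  have hw : w.1.right = 1 := w.2
  exact Subtype.ext (RegularWreathProduct.ext h (hv.trans hw.symm))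

lemma left_commutatorElement_mulSingle_inl [DecidableEq Q] {q : Q} (hq : q ≠ 1) (d : D) :
    (⁅(⟨Pi.mulSingle 1 d, 1⟩ : D ≀ᵣ Q), inl q⁆).left 1 = d := by
  simp [commutatorElement_def, mul_def, inv_left, hq]

end RegularWreathProduct

theorem RegularWreathProduct.derivedSeries_succ_eq_bot_iff {D Q : Type*} [Group D]
    [CommGroup Q] [Nontrivial Q] (j : ℕ) :
    derivedSeries (D ≀ᵣ Q) (j + 1) = ⊥ ↔ derivedSeries D j = ⊥ := by
  classical
  have hker : derivedSeries (D ≀ᵣ Q) 1 ≤ rightHom.ker := by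
    rw [derivedSeries_one]
    exact Abelianization.commutator_subset_ker rightHom
  rw [add_comm]
  constructor
  · intro h
    set A := derivedSeries (D ≀ᵣ Q) 1
    have hA : derivedSeries A j = ⊥ := by
      have := map_derivedSeries_le_derivedSeries_add A.subtype (range_subtype A).le j
      rwa [h, le_bot_iff, map_eq_bot_iff_of_injective _ A.subtype_injective] at this
    obtain ⟨q, hq⟩ := exists_ne (1 : Q)
    refine derivedSeries_eq_bot_of_surjective
      (f := (Pi.evalMonoidHom (fun _ : Q => D) 1).comp (leftOfKerRightHom.comp (inclusion hker)))
      (fun d => ?_) hA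
    exact ⟨⟨_, commutator_mem_commutator (mem_top ⟨Pi.mulSingle 1 d, 1⟩) (mem_top (inl q))⟩,
      left_commutatorElement_mulSingle_inl hq d⟩
  · intro h
    have hker_bot : derivedSeries (rightHom : D ≀ᵣ Q →* Q).ker j = ⊥ :=
      derivedSeries_eq_bot_of_injective leftOfKerRightHom_injective
        ((derivedSeries_pi_eq_bot_iff j).mpr fun _ => h)
    refine le_bot_iff.mp ((derivedSeries_add_le_map_subtype _ hker j).trans ?_)
    rw [hker_bot, Subgroup.map_bot]

namespace IteratedWreathProduct

variable (G : Type*) [Group G]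

def succMulEquiv (n : ℕ) : IteratedWreathProduct G (n + 1) ≃* IteratedWreathProduct G n ≀ᵣ G :=
  MulEquiv.refl _

end IteratedWreathProduct

theorem IteratedWreathProduct.derivedSeries_eq_bot_iff {G : Type*} [CommGroup G] [Nontrivial G]
    (n j : ℕ) : derivedSeries (IteratedWreathProduct G n) j = ⊥ ↔ n ≤ j := by
  induction n generalizing j with
  | zero =>
    have : Subsingleton (IteratedWreathProduct G 0) := inferInstanceAs (Subsingleton PUnit)
    simpa only [Nat.zero_le, iff_true] using Subgroup.eq_bot_of_subsingleton _
  | succ n ih =>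
    rw [(succMulEquiv G n).derivedSeries_eq_bot_iff]
    rcases j with _ | j
    · simp
    · rw [RegularWreathProduct.derivedSeries_succ_eq_bot_iff, ih]
      omega

-- One block of `p ^ i` points for each unit of the `i`-th base-`p` digit of `n`.
abbrev DigitBlock (p n : ℕ) : Type :=
  Σ i : Fin (p.digits n).length, Fin (p.digits n)[(i : ℕ)]

namespace DigitBlock

variable {p n : ℕ}

lemma sum_pow : ∑ x : DigitBlock p n, p ^ (x.1 : ℕ) = n := by
  conv_rhs => rw [← Nat.ofDigits_digits p n, Nat.ofDigits_eq_sum_mapIdx]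
  simp [Fintype.sum_sigma, List.mapIdx_eq_ofFn, List.sum_ofFn]

lemma card : Fintype.card (DigitBlock p n) = (p.digits n).sum := by
  simp [Fintype.card_sigma]

lemma sum_geom_sum [Fact p.Prime] :
    ∑ x : DigitBlock p n, ∑ i ∈ Finset.range x.1, p ^ i = padicValNat p n.factorial := by
  have hp : 1 ≤ p := (Fact.out : p.Prime).one_le
  refine Nat.eq_of_mul_eq_mul_left (Nat.sub_pos_of_lt (Fact.out : p.Prime).one_lt) ?_
  rw [sub_one_mul_padicValNat_factorial, Finset.mul_sum]
  simp_rw [mul_comm (p - 1), geom_sum_mul_of_one_le hp]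
  rw [Finset.sum_tsub_distrib _ fun x _ => Nat.one_le_pow _ _ hp, sum_pow,
    Finset.sum_const, smul_eq_mul, mul_one, Finset.card_univ, card]

lemma forall_le_iff (hp : 1 < p) {j : ℕ} :
    (∀ x : DigitBlock p n, (x.1 : ℕ) ≤ j) ↔ Nat.log p n ≤ j := by
  rcases eq_or_ne n 0 with rfl | hn
  · exact iff_of_true (fun x => absurd x.1.isLt (by simp)) (by simp)
  have hlen := Nat.length_digits p n hp hn
  constructor
  · intro h
    have htop : (p.digits n)[Nat.log p n] ≠ 0 := by
      simpa [List.getLast_eq_getElem, hlen] using Nat.getLast_digit_ne_zero p hn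
    exact h ⟨⟨Nat.log p n, by omega⟩, ⟨0, Nat.pos_of_ne_zero htop⟩⟩
  · intro h x
    have := x.1.isLt
    omega

end DigitBlock

noncomputable def Sylow.mulEquivOfInjective {p : ℕ} [Fact p.Prime] {G H : Type*} [Group G]
    [Finite G] [Group H] {f : H →* G} (hf : Injective f)
    (hcard : Nat.card H = p ^ (Nat.card G).factorization p) (P : Sylow p G) : P ≃* H :=
  let e := MonoidHom.ofInjective hf
  (P.equiv (Sylow.ofCard f.range ((Nat.card_congr e.toEquiv).symm.trans hcard))).trans e.symm

section PiIteratedWreathProduct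

variable (G : Type*) {ι : Type*} (deg : ι → ℕ)

lemma card_pi_iteratedWreathProduct [Fintype ι] [Finite G] :
    Nat.card (∀ x, IteratedWreathProduct G (deg x)) =
      Nat.card G ^ ∑ x, ∑ i ∈ Finset.range (deg x), Nat.card G ^ i := by
  simp only [Nat.card_pi, IteratedWreathProduct.card, Finset.prod_pow_eq_pow_sum]

variable [Group G]

def piIteratedWreathToPermHom :
    (∀ x, IteratedWreathProduct G (deg x)) →* Equiv.Perm (Σ x, Fin (deg x) → G) :=
  (Equiv.Perm.sigmaCongrRightHom _).comp
    (MonoidHom.piMap fun x => iteratedWreathToPermHom G (deg x))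

lemma piIteratedWreathToPermHom_injective : Injective (piIteratedWreathToPermHom G deg) :=
  Equiv.Perm.sigmaCongrRightHom_injective.comp
    (Injective.piMap fun x => iteratedWreathToPermHomInj G (deg x))

end PiIteratedWreathProduct

noncomputable def Sylow.mulEquivPiIteratedWreathProduct (p : ℕ) [Fact p.Prime] (n : ℕ)
    (α : Type*) [Finite α] (hα : Nat.card α = n) (G : Type*) [Group G] [Finite G]
    (hG : Nat.card G = p) (P : Sylow p (Equiv.Perm α)) :
    P ≃* ∀ x : DigitBlock p n, IteratedWreathProduct G x.1 := by
  have hsize : Nat.card (Σ x : DigitBlock p n, Fin x.1 → G) = n := by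
    simp only [Nat.card_sigma, Nat.card_fun, Nat.card_fin, hG]
    exact DigitBlock.sum_pow
  let e := (Finite.equivFinOfCardEq hsize).trans (Finite.equivFinOfCardEq hα).symm
  refine Sylow.mulEquivOfInjective (f := e.permCongrHom.toMonoidHom.comp
    (piIteratedWreathToPermHom G fun x : DigitBlock p n => x.1))
    (e.permCongrHom.injective.comp (piIteratedWreathToPermHom_injective _ _)) ?_ P
  rw [card_pi_iteratedWreathProduct, hG, DigitBlock.sum_geom_sum, Nat.card_perm, hα,
    Nat.factorization_def _ Fact.out]

theorem stmt5_general {p n : ℕ} (hp : p.Prime)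
    (P : Sylow p (Equiv.Perm (Fin n))) :
    derivedLength ↥(P : Subgroup (Equiv.Perm (Fin n))) = Nat.log p n := by
  have : Fact p.Prime := ⟨hp⟩
  have : Fact (1 < p) := ⟨hp.one_lt⟩
  let e := Sylow.mulEquivPiIteratedWreathProduct p n (Fin n) (Nat.card_fin n)
    (Multiplicative (ZMod p)) (by simp) P
  refine derivedLength_eq_of_derivedSeries_eq_bot_iff fun j => ?_
  rw [e.derivedSeries_eq_bot_iff, derivedSeries_pi_eq_bot_iff]
  simp only [IteratedWreathProduct.derivedSeries_eq_bot_iff]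
  exact DigitBlock.forall_le_iff hp.one_lt

/-- If `n` has `p`-adic expansion `n = a_0 + a_1 p + ⋯ + a_k p^k` with `a_k > 0`
(equivalently `k = ⌊log_p n⌋ = Nat.log p n`, and `k ≥ 1` since `p ≤ n`), then a Sylow
`p`-subgroup of the symmetric group `Sym_n` (which is a direct product of `a_i` copies of
the iterated wreath products `P_{p^i}`) has derived length exactly `k`. -/
theorem stmt5 {p n : ℕ} (hp : p.Prime) (hpn : p ≤ n)
    (P : Sylow p (Equiv.Perm (Fin n))) :
    derivedLength ↥(P : Subgroup (Equiv.Perm (Fin n))) = Nat.log p n :=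
  stmt5_general hp P
end
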